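/- If c is a common root of φ₁ and φ₂, then the vector (−f₂(c)·(1, c, …, c^{n₁−1}), f₁(c)·(1, c, …, c^{n₂−1}))ᵀ lies in the kernel of the transpose of the square double ideal matrix H*_{φ₁,φ₂}(f₁,f₂)_{m×m} with m = n₁+n₂. -/

import Mathlib

/-!
The row vector `(1, c, …, c^{n-1})` is a left eigenvector of the rotation matrix `H_φ` with
eigenvalue `c` whenever `φ(c) = 0`: its last column encodes `cⁿ = -∑_{i<n} φᵢ cⁱ`. Pairing it
with `H_φ^k f` therefore gives `c^k f(c)`, so the `j`-th entry of the product is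
`-f₂(c) · cʲ f₁(c) + f₁(c) · cʲ f₂(c) = 0`.
-/

open Polynomial Matrix

/-- The rotation matrix `H_φ` of a monic polynomial
`φ(x) = xⁿ − φ_{n-1}x^{n-1} − ⋯ − φ₁x − φ₀` (note `φᵢ = -(coeff φ i)` for `i < n`). -/
def rotMat (n : ℕ) (φ : Polynomial ℂ) : Matrix (Fin n) (Fin n) ℂ :=
  Matrix.of fun i j =>
    if (j : ℕ) + 1 < n then (if (i : ℕ) = (j : ℕ) + 1 then 1 else 0)
    else -φ.coeff (i : ℕ)

/-- The polynomial `f(x) = Σ_{j=0}^{n-1} fⱼ xʲ` associated to a vector `f`. -/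
noncomputable def vecPoly (n : ℕ) (f : Fin n → ℂ) : Polynomial ℂ :=
  ∑ j : Fin n, Polynomial.C (f j) * Polynomial.X ^ (j : ℕ)

/-- The `(n₁+n₂) × m` double ideal matrix, stacking `[f₁, H₁f₁, …, H₁^{m-1}f₁]`
on top of `[f₂, H₂f₂, …, H₂^{m-1}f₂]`. -/
noncomputable def dblIdealMat (n₁ n₂ m : ℕ) (H₁ : Matrix (Fin n₁) (Fin n₁) ℂ)
    (H₂ : Matrix (Fin n₂) (Fin n₂) ℂ) (f₁ : Fin n₁ → ℂ) (f₂ : Fin n₂ → ℂ) :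
    Matrix (Fin n₁ ⊕ Fin n₂) (Fin m) ℂ :=
  Matrix.of fun i j =>
    Sum.elim ((H₁ ^ (j : ℕ)).mulVec f₁) ((H₂ ^ (j : ℕ)).mulVec f₂) i

theorem Matrix.vecMul_pow_of_vecMul_eq_smul {R n : Type*} [CommSemiring R] [Fintype n]
    [DecidableEq n] {A : Matrix n n R} {v : n → R} {c : R} (h : v ᵥ* A = c • v) (k : ℕ) :
    v ᵥ* A ^ k = c ^ k • v := by
  induction k with
  | zero => simp
  | succ k ih => rw [pow_succ, ← vecMul_vecMul, ih, smul_vecMul, h, smul_smul, pow_succ]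

theorem Matrix.pow_mulVec_dotProduct_of_vecMul_eq_smul {R n : Type*} [CommSemiring R]
    [Fintype n] [DecidableEq n] {A : Matrix n n R} {v : n → R} {c : R} (h : v ᵥ* A = c • v)
    (k : ℕ) (f : n → R) : A ^ k *ᵥ f ⬝ᵥ v = c ^ k * (f ⬝ᵥ v) := by
  rw [dotProduct_comm, dotProduct_mulVec, vecMul_pow_of_vecMul_eq_smul h, smul_dotProduct,
    smul_eq_mul, dotProduct_comm]

theorem vecMul_rotMat_of_isRoot {n : ℕ} {φ : ℂ[X]} (hm : φ.Monic) (hd : φ.natDegree = n)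
    {c : ℂ} (hc : φ.IsRoot c) :
    (fun a : Fin n => c ^ (a : ℕ)) ᵥ* rotMat n φ = c • fun a : Fin n => c ^ (a : ℕ) := by
  funext t
  simp only [vecMul, dotProduct, rotMat, of_apply, Pi.smul_apply, smul_eq_mul]
  split_ifs with ht
  · rw [Fintype.sum_eq_single ⟨t + 1, ht⟩ fun a ha => by simp [Fin.ext_iff.not.mp ha]]
    simp [pow_succ']
  · have hlow : ∑ i ∈ Finset.range n, φ.coeff i * c ^ i = -c ^ n := by
      have := hc.eq_zero
      rw [hm.as_sum, hd] at this
      simpa [eval_finsetSum, eq_neg_iff_add_eq_zero, add_comm] using this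
    calc ∑ a : Fin n, c ^ (a : ℕ) * -φ.coeff a
        = -∑ i ∈ Finset.range n, φ.coeff i * c ^ i := by
          rw [Fin.sum_univ_eq_sum_range (fun i => c ^ i * -φ.coeff i), ← Finset.sum_neg_distrib]
          simp only [mul_neg, mul_comm]
      _ = c * c ^ (t : ℕ) := by rw [hlow, neg_neg, ← pow_succ']; congr; omega

theorem dblIdealMat_transpose_mulVec_sumElim {n₁ n₂ m : ℕ} (H₁ : Matrix (Fin n₁) (Fin n₁) ℂ)
    (H₂ : Matrix (Fin n₂) (Fin n₂) ℂ) (f₁ : Fin n₁ → ℂ) (f₂ : Fin n₂ → ℂ)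
    (w₁ : Fin n₁ → ℂ) (w₂ : Fin n₂ → ℂ) :
    (dblIdealMat n₁ n₂ m H₁ H₂ f₁ f₂)ᵀ *ᵥ Sum.elim w₁ w₂ =
      fun j : Fin m => H₁ ^ (j : ℕ) *ᵥ f₁ ⬝ᵥ w₁ + H₂ ^ (j : ℕ) *ᵥ f₂ ⬝ᵥ w₂ := by
  funext j
  simp [mulVec, dotProduct, Fintype.sum_sum_type, dblIdealMat]

theorem dblIdealMat_transpose_mulVec_eq_zero {n₁ n₂ m : ℕ} {H₁ : Matrix (Fin n₁) (Fin n₁) ℂ}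
    {H₂ : Matrix (Fin n₂) (Fin n₂) ℂ} {v₁ : Fin n₁ → ℂ} {v₂ : Fin n₂ → ℂ} {c : ℂ}
    (h₁ : v₁ ᵥ* H₁ = c • v₁) (h₂ : v₂ ᵥ* H₂ = c • v₂) (f₁ : Fin n₁ → ℂ) (f₂ : Fin n₂ → ℂ) :
    (dblIdealMat n₁ n₂ m H₁ H₂ f₁ f₂)ᵀ *ᵥ Sum.elim (-(f₂ ⬝ᵥ v₂) • v₁) ((f₁ ⬝ᵥ v₁) • v₂) = 0 := by
  funext j
  simp only [dblIdealMat_transpose_mulVec_sumElim, dotProduct_smul,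
    pow_mulVec_dotProduct_of_vecMul_eq_smul h₁, pow_mulVec_dotProduct_of_vecMul_eq_smul h₂,
    smul_eq_mul, Pi.zero_apply]
  ring

theorem dblIdealMat_transpose_kernel_vector_general (n₁ n₂ : ℕ)
    (φ₁ φ₂ : Polynomial ℂ) (hm₁ : φ₁.Monic) (hm₂ : φ₂.Monic)
    (hd₁ : φ₁.natDegree = n₁) (hd₂ : φ₂.natDegree = n₂)
    (f₁ : Fin n₁ → ℂ) (f₂ : Fin n₂ → ℂ)
    (c : ℂ) (hc₁ : φ₁.IsRoot c) (hc₂ : φ₂.IsRoot c) :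
    (dblIdealMat n₁ n₂ (n₁ + n₂) (rotMat n₁ φ₁) (rotMat n₂ φ₂) f₁ f₂)ᵀ.mulVec
        (Sum.elim
          (fun a : Fin n₁ => -(∑ j : Fin n₂, f₂ j * c ^ (j : ℕ)) * c ^ (a : ℕ))
          (fun b : Fin n₂ => (∑ j : Fin n₁, f₁ j * c ^ (j : ℕ)) * c ^ (b : ℕ))) = 0 :=
  dblIdealMat_transpose_mulVec_eq_zero (vecMul_rotMat_of_isRoot hm₁ hd₁ hc₁)
    (vecMul_rotMat_of_isRoot hm₂ hd₂ hc₂) f₁ f₂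

/-- If `c` is a common root of `φ₁` and `φ₂`, then the vector
`(−f₂(c)·(1, c, …, c^{n₁−1}), f₁(c)·(1, c, …, c^{n₂−1}))ᵀ` lies in the kernel of the
transpose of the square double ideal matrix `H*_{φ₁,φ₂}(f₁,f₂)_{m×m}`, `m = n₁+n₂`. -/
theorem dblIdealMat_transpose_kernel_vector (n₁ n₂ : ℕ) (hn₁ : 0 < n₁) (hn₂ : 0 < n₂)
    (φ₁ φ₂ : Polynomial ℂ) (hm₁ : φ₁.Monic) (hm₂ : φ₂.Monic)
    (hd₁ : φ₁.natDegree = n₁) (hd₂ : φ₂.natDegree = n₂)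
    (h₁0 : φ₁.coeff 0 ≠ 0) (h₂0 : φ₂.coeff 0 ≠ 0)
    (f₁ : Fin n₁ → ℂ) (f₂ : Fin n₂ → ℂ)
    (c : ℂ) (hc₁ : φ₁.IsRoot c) (hc₂ : φ₂.IsRoot c) :
    (dblIdealMat n₁ n₂ (n₁ + n₂) (rotMat n₁ φ₁) (rotMat n₂ φ₂) f₁ f₂)ᵀ.mulVec
        (Sum.elim
          (fun a : Fin n₁ => -(∑ j : Fin n₂, f₂ j * c ^ (j : ℕ)) * c ^ (a : ℕ))
          (fun b : Fin n₂ => (∑ j : Fin n₁, f₁ j * c ^ (j : ℕ)) * c ^ (b : ℕ))) = 0 :=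
  dblIdealMat_transpose_kernel_vector_general n₁ n₂ φ₁ φ₂ hm₁ hm₂ hd₁ hd₂ f₁ f₂ c hc₁ hc₂
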